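/- arXiv:2107.08615 — 3 statements merged into one kernel-verified Lean document; each statement's English description precedes it below -/
import Mathlib

section
/- Let T be a string of length n and T' obtained from T by a single character substitution. Then δ(T') ≤ δ(T) + 1, where δ(S) = max_{1 ≤ k ≤ |S|} Substr(S,k)/k. -/
/-- `substrCount T k` is the number of distinct length-`k` (contiguous) substrings of `T`. -/
def substrCount {α : Type*} [DecidableEq α] (T : List α) (k : ℕ) : ℕ :=
  ((Finset.range (T.length - k + 1)).image fun j => (T.drop j).take k).card

/-- Substring complexity `δ(T) = max_{1 ≤ k ≤ |T|} Substr(T,k)/k`. -/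
def delta {α : Type*} [DecidableEq α] (T : List α) : NNRat :=
  (Finset.Icc 1 T.length).sup fun k => (substrCount T k : NNRat) / (k : NNRat)

/-!
A length-`k` window of `T'` that avoids the substituted position `i` is also a window of `T`,
and at most `k` start positions (those in `[i + 1 - k, i]`) give a window containing `i`.
Hence `Substr(T', k) ≤ Substr(T, k) + k`, and dividing by `k` gives the bound on `δ`.
-/

open Finset

section Substitution

variable {α : Type*}

lemma take_drop_eq_of_agree_off {T T' : List α} {i j k : ℕ}
    (hagree : ∀ m, m ≠ i → T[m]? = T'[m]?) (havoid : i < j ∨ j + k ≤ i) :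
    (T.drop j).take k = (T'.drop j).take k := by
  refine List.ext_getElem? fun m => ?_
  rw [List.getElem?_take, List.getElem?_take]
  split
  · rw [List.getElem?_drop, List.getElem?_drop]
    exact hagree _ (by omega)
  · rfl

lemma substrCount_le_add_of_agree_off [DecidableEq α] {T T' : List α} {i : ℕ}
    (hlen : T'.length = T.length) (hagree : ∀ m, m ≠ i → T[m]? = T'[m]?) (k : ℕ) :
    substrCount T' k ≤ substrCount T k + k := by
  unfold substrCount
  rw [hlen]
  set starts := range (T.length - k + 1)
  have hsub : starts.image (fun j => (T'.drop j).take k) ⊆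
      starts.image (fun j => (T.drop j).take k) ∪
        (Ico (i + 1 - k) (i + 1)).image (fun j => (T'.drop j).take k) := by
    intro w hw
    obtain ⟨j, hj, rfl⟩ := mem_image.1 hw
    by_cases hcover : j ∈ Ico (i + 1 - k) (i + 1)
    · exact mem_union_right _ (mem_image_of_mem _ hcover)
    · rw [mem_Ico] at hcover
      exact mem_union_left _
        (mem_image.2 ⟨j, hj, take_drop_eq_of_agree_off hagree (by omega)⟩)
  calc _ ≤ _ := card_le_card hsub
    _ ≤ _ := card_union_le _ _
    _ ≤ _ := by
      gcongr
      calc _ ≤ _ := card_image_le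
        _ ≤ k := by rw [Nat.card_Ico]; omega

lemma substrCount_div_le_delta [DecidableEq α] (T : List α) {k : ℕ} (hk : k ∈ Icc 1 T.length) :
    (substrCount T k : ℚ≥0) / k ≤ delta T :=
  Finset.le_sup (f := fun k => (substrCount T k : ℚ≥0) / k) hk

end Substitution

theorem delta_substitution_le_general {α : Type*} [DecidableEq α]
    (T T' : List α) (n i : ℕ) (hT : T.length = n) (hT' : T'.length = n)
    (hagree : ∀ j, j ≠ i → T[j]? = T'[j]?) :
    delta T' ≤ delta T + 1 := by
  refine Finset.sup_le fun k hk => ?_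
  have hk' : k ∈ Icc 1 T.length := by rw [mem_Icc] at hk ⊢; omega
  have hkpos : (0 : ℚ≥0) < k := by exact_mod_cast (mem_Icc.1 hk').1
  calc (substrCount T' k : ℚ≥0) / k ≤ ((substrCount T k + k : ℕ) : ℚ≥0) / k := by
        gcongr
        exact substrCount_le_add_of_agree_off (hT'.trans hT.symm) hagree k
    _ = substrCount T k / k + 1 := by push_cast; rw [add_div, div_self hkpos.ne']
    _ ≤ delta T + 1 := by gcongr; exact substrCount_div_le_delta T hk'

/-- If `T'` is obtained from `T` by a single character substitution, then
`δ(T') ≤ δ(T) + 1`. -/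
theorem delta_substitution_le {α : Type*} [DecidableEq α]
    (T T' : List α) (n i : ℕ) (hT : T.length = n) (hT' : T'.length = n) (hi : i < n)
    (hagree : ∀ j, j ≠ i → T[j]? = T'[j]?) (hdiff : T[i]? ≠ T'[i]?) :
    delta T' ≤ delta T + 1 :=
  delta_substitution_le_general T T' n i hT hT' hagree
end

section
/- For any nonempty string T, the smallest string attractor size satisfies γ(T) ≥ δ(T), i.e., for every k with 1 ≤ k ≤ |T|, the number of distinct length-k substrings of T is at most k·γ(T). -/
/-- `Γ` is a string attractor for `T` (positions 0-indexed). -/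
def IsAttractor {α : Type*} (T : List α) (Γ : Finset ℕ) : Prop :=
  ∀ j k : ℕ, 0 < k → j + k ≤ T.length →
    ∃ j', j' + k ≤ T.length ∧ (T.drop j').take k = (T.drop j).take k ∧
      ∃ p ∈ Γ, j' ≤ p ∧ p < j' + k

/-- `gamma T` is the smallest size of a string attractor for `T`. -/
noncomputable def gamma {α : Type*} (T : List α) : ℕ :=
  sInf {m | ∃ Γ : Finset ℕ, IsAttractor T Γ ∧ Γ.card = m}

/-! Every distinct length-`k` substring has an occurrence starting at `p - i` for some attractor
position `p` and offset `i < k`, so it is determined by the pair `(p, i)`. -/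

open Finset

theorem isAttractor_range_length {α : Type*} (T : List α) :
    IsAttractor T (range T.length) :=
  fun j _ hk hjk => ⟨j, hjk, rfl, j, mem_range.2 (by omega), le_rfl, by omega⟩

theorem exists_isAttractor_card_eq_gamma {α : Type*} (T : List α) :
    ∃ Γ : Finset ℕ, IsAttractor T Γ ∧ Γ.card = gamma T :=
  Nat.sInf_mem (s := {m | ∃ Γ : Finset ℕ, IsAttractor T Γ ∧ Γ.card = m})
    ⟨_, range T.length, isAttractor_range_length T, rfl⟩

theorem IsAttractor.substrCount_le_mul_card {α : Type*} [DecidableEq α] {T : List α}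
    {Γ : Finset ℕ} (hΓ : IsAttractor T Γ) {k : ℕ} (hk : 0 < k) (hkT : k ≤ T.length) :
    substrCount T k ≤ k * #Γ := by
  have hcover : (range (T.length - k + 1)).image (fun j => (T.drop j).take k) ⊆
      (Γ ×ˢ range k).image fun q => (T.drop (q.1 - q.2)).take k := by
    intro s hs
    obtain ⟨j, hj, rfl⟩ := mem_image.1 hs
    obtain ⟨j', -, heq, p, hp, hle, hlt⟩ := hΓ j k hk (by rw [mem_range] at hj; omega)
    exact mem_image.2 ⟨(p, p - j'), mem_product.2 ⟨hp, mem_range.2 (by omega)⟩,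
      by rw [Nat.sub_sub_self hle, heq]⟩
  calc substrCount T k ≤ #((Γ ×ˢ range k).image fun q => (T.drop (q.1 - q.2)).take k) :=
        card_le_card hcover
    _ ≤ #(Γ ×ˢ range k) := card_image_le
    _ = k * #Γ := by rw [card_product, card_range, mul_comm]

theorem delta_le_of_substrCount_le {α : Type*} [DecidableEq α] {T : List α} {m : ℕ}
    (h : ∀ k, 1 ≤ k → k ≤ T.length → substrCount T k ≤ k * m) : delta T ≤ m :=
  Finset.sup_le fun k hk => by
    obtain ⟨hk1, hkT⟩ := mem_Icc.1 hk
    rw [div_le_iff₀ (Nat.cast_pos.2 hk1)]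
    exact_mod_cast (h k hk1 hkT).trans_eq (mul_comm _ _)

theorem gamma_ge_delta_general {α : Type*} [DecidableEq α] (T : List α) :
    (∀ k, 1 ≤ k → k ≤ T.length → substrCount T k ≤ k * gamma T) ∧
      delta T ≤ (gamma T : NNRat) := by
  obtain ⟨Γ, hΓ, hcard⟩ := exists_isAttractor_card_eq_gamma T
  have hcount : ∀ k, 1 ≤ k → k ≤ T.length → substrCount T k ≤ k * gamma T :=
    fun k hk hkT => hcard ▸ hΓ.substrCount_le_mul_card hk hkT
  exact ⟨hcount, delta_le_of_substrCount_le hcount⟩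

/-- For any nonempty string `T`, `γ(T) ≥ δ(T)`: for every `1 ≤ k ≤ |T|` the number of
distinct length-`k` substrings is at most `k · γ(T)`, and hence `δ(T) ≤ γ(T)`. -/
theorem gamma_ge_delta {α : Type*} [DecidableEq α] (T : List α) (hT : T ≠ []) :
    (∀ k, 1 ≤ k → k ≤ T.length → substrCount T k ≤ k * gamma T) ∧
      delta T ≤ (gamma T : NNRat) :=
  gamma_ge_delta_general T
end

section
/- For the smallest grammar size g*, a single character substitution at most doubles the grammar size: if T' is obtained from T by substituting one character, then g*(T') ≤ 2·g*(T). -/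
/-!
Take a smallest grammar for `T` and follow the root-to-leaf path of its derivation tree that
ends at position `i`. Add a copy of every nonterminal on this path: its rule is the rule of the
original with the one symbol on the path replaced by the copy of that symbol (at the bottom, the
terminal replaced by `c`). The copy of the start symbol then derives `T.set i c`, and each copied
rule is as long as its original, so the grammar at most doubles in size.
-/

/-- A straight-line program (grammar compression): nonterminals are `0, …, n-1`, each
with a single production whose right-hand side is a list of symbols (nonterminals or
terminal characters), where nonterminal references point to strictly smaller indices. -/
structure SLP (α : Type*) where
  n : ℕ
  rhs : ℕ → List (ℕ ⊕ α)
  wf : ∀ i < n, ∀ s ∈ rhs i, ∀ j : ℕ, s = Sum.inl j → j < i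

/-- The size of a grammar: total length of the right-hand sides of all productions. -/
def SLP.size {α : Type*} (G : SLP α) : ℕ :=
  (Finset.range G.n).sum fun i => (G.rhs i).length

/-- `G` generates exactly the string `T`: the expansion of the start symbol
(the last nonterminal) is `T`. -/
def SLP.Generates {α : Type*} (G : SLP α) (T : List α) : Prop :=
  0 < G.n ∧ ∃ expand : ℕ → List α,
    (∀ i < G.n, expand i = ((G.rhs i).map (Sum.elim expand fun a => [a])).flatten) ∧
      expand (G.n - 1) = T

/-- `gStar T` is the size of a smallest grammar generating exactly `T`. -/
noncomputable def gStar {α : Type*} (T : List α) : ℕ :=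
  sInf {m | ∃ G : SLP α, G.Generates T ∧ G.size = m}

theorem List.exists_flatMap_set_eq {β γ : Type*} (f : β → List γ) (c : γ) :
    ∀ {L : List β} {p : ℕ}, p < (L.flatMap f).length →
      ∃ A s B q, L = A ++ s :: B ∧ q < (f s).length ∧
        (L.flatMap f).set p c = A.flatMap f ++ (f s).set q c ++ B.flatMap f
  | [], p, hp => by simp at hp
  | s :: L, p, hp => by
    by_cases hps : p < (f s).length
    · exact ⟨[], s, L, p, rfl, hps, by simp [List.set_append_left _ _ hps]⟩
    · have hpL : p - (f s).length < (L.flatMap f).length := by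
        simp only [List.flatMap_cons, List.length_append] at hp; omega
      obtain ⟨A, s', B, q, rfl, hq, hset⟩ := List.exists_flatMap_set_eq f c hpL
      refine ⟨s :: A, s', B, q, rfl, hq, ?_⟩
      rw [List.flatMap_cons, List.set_append_right _ _ (not_lt.mp hps), hset]
      simp

namespace SLP

variable {α : Type*}

def Acyclic (r : ℕ → List (ℕ ⊕ α)) : Prop :=
  ∀ x j, Sum.inl j ∈ r x → j < x

/-- The guard `j < x` only makes the recursion well founded; it always holds in an acyclic
family. -/
def expand (r : ℕ → List (ℕ ⊕ α)) (x : ℕ) : List α :=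
  (r x).flatMap fun s => match s with
    | .inl j => if _ : j < x then expand r j else []
    | .inr a => [a]
termination_by x

def expandSymbol (r : ℕ → List (ℕ ⊕ α)) : ℕ ⊕ α → List α :=
  Sum.elim (expand r) fun a => [a]

variable {r r' : ℕ → List (ℕ ⊕ α)}

theorem expand_eq (hr : Acyclic r) (x : ℕ) :
    expand r x = (r x).flatMap (expandSymbol r) := by
  rw [expand, List.flatMap_def, List.flatMap_def]
  congr 1
  refine List.map_congr_left fun s hs => ?_
  rcases s with j | a
  · simp [expandSymbol, hr x j hs]
  · rfl

theorem expand_congr {x : ℕ} (h : ∀ y ≤ x, r y = r' y) : expand r x = expand r' x := by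
  induction x using Nat.strong_induction_on with
  | _ x ih =>
  rw [expand, expand, h x le_rfl]
  congr 1
  funext s
  rcases s with j | a
  · simp only
    split
    · next hj => exact ih j hj fun y hy => h y (by omega)
    · rfl
  · rfl

variable {d : ℕ → List (ℕ ⊕ α)} {n k : ℕ}

theorem expandSymbol_congr {s : ℕ ⊕ α}
    (h : ∀ j, s = .inl j → ∀ y ≤ j, r y = r' y) : expandSymbol r s = expandSymbol r' s := by
  rcases s with j | a
  · exact expand_congr (h j rfl)
  · rfl

/-- The rules `r` of the nonterminals below `n`, followed by the rules `d`, where `d x` is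
the rule of the copy `n + x` of the nonterminal `x`. -/
def shiftAppend (r : ℕ → List (ℕ ⊕ α)) (n : ℕ) (d : ℕ → List (ℕ ⊕ α)) :
    ℕ → List (ℕ ⊕ α) :=
  fun y => if y < n then r y else d (y - n)

theorem acyclic_shiftAppend_nil (hr : Acyclic r) : Acyclic (shiftAppend r n fun _ => []) := by
  intro y j hj
  unfold shiftAppend at hj
  split at hj
  · exact hr y j hj
  · simp at hj

theorem shiftAppend_update_ne {l : List (ℕ ⊕ α)} {y : ℕ} (hy : y ≠ n + k) :
    shiftAppend r n (Function.update d k l) y = shiftAppend r n d y := by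
  unfold shiftAppend
  split
  · rfl
  · rw [Function.update_of_ne (by omega)]

theorem acyclic_shiftAppend_update {l : List (ℕ ⊕ α)} (hd : Acyclic (shiftAppend r n d))
    (hl : ∀ j, Sum.inl j ∈ l → j < n + k) :
    Acyclic (shiftAppend r n (Function.update d k l)) := by
  intro y j hj
  by_cases hy : y = n + k
  · subst hy
    simp only [shiftAppend, show ¬n + k < n by omega, if_false, Nat.add_sub_cancel_left,
      Function.update_self] at hj
    exact hl j hj
  · rw [shiftAppend_update_ne hy] at hj
    exact hd y j hj

/-- One step down the path: the copy of `k` is the rule of `k` with `s` replaced by `s'`. -/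
theorem exists_copy_of_symbol (hr : Acyclic r) (hk : k < n) {A B : List (ℕ ⊕ α)}
    {s s' : ℕ ⊕ α} (hrk : r k = A ++ s :: B) (hlen : ∀ x, (d x).length ≤ (r x).length)
    (hd : Acyclic (shiftAppend r n d)) (hs' : ∀ j, s' = .inl j → j < n + k) {q : ℕ} {c : α}
    (hexp : expandSymbol (shiftAppend r n d) s' = (expandSymbol r s).set q c) :
    ∃ d' : ℕ → List (ℕ ⊕ α), (∀ x, (d' x).length ≤ (r x).length) ∧
      Acyclic (shiftAppend r n d') ∧
      expand (shiftAppend r n d') (n + k) =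
        A.flatMap (expandSymbol r) ++ (expandSymbol r s).set q c ++
          B.flatMap (expandSymbol r) := by
  set d' := Function.update d k (A ++ s' :: B)
  have hself : shiftAppend r n d' (n + k) = A ++ s' :: B := by
    simp [d', shiftAppend]
  have hacyc : Acyclic (shiftAppend r n d') := by
    refine acyclic_shiftAppend_update hd fun j hj => ?_
    rcases List.mem_append.mp hj with hA | hB
    · have := hr k j (by simp [hrk, hA]); omega
    · rcases List.mem_cons.mp hB with hs | hB
      · exact hs' j hs.symm
      · have := hr k j (by simp [hrk, hB]); omega
  have horig : ∀ t ∈ r k, expandSymbol (shiftAppend r n d') t = expandSymbol r t :=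
    fun t ht => expandSymbol_congr fun j hj y hy => by
      have := hr k j (hj ▸ ht)
      simp [shiftAppend, show y < n by omega]
  have hcopy : expandSymbol (shiftAppend r n d') s' = expandSymbol (shiftAppend r n d) s' :=
    expandSymbol_congr fun j hj y hy => shiftAppend_update_ne (by have := hs' j hj; omega)
  refine ⟨d', fun x => ?_, hacyc, ?_⟩
  · by_cases hx : x = k
    · simp [d', hx, hrk]
    · simpa [d', Function.update_of_ne hx] using hlen x
  · rw [expand_eq hacyc, hself, List.flatMap_append, List.flatMap_cons, hcopy, hexp,
      List.flatMap_congr fun t ht => horig t (by simp [hrk, ht]),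
      List.flatMap_congr (l := B) fun t ht => horig t (by simp [hrk, ht]), List.append_assoc]

theorem exists_copies_expand_set (hr : Acyclic r) (hn : ∀ x, n ≤ x → r x = []) (c : α)
    (k : ℕ) : ∀ p < (expand r k).length, ∃ d : ℕ → List (ℕ ⊕ α),
      (∀ x, (d x).length ≤ (r x).length) ∧ Acyclic (shiftAppend r n d) ∧
      expand (shiftAppend r n d) (n + k) = (expand r k).set p c := by
  induction k using Nat.strong_induction_on with
  | _ k ih =>
  intro p hp
  rw [expand_eq hr] at hp ⊢
  obtain ⟨A, s, B, q, hrk, hq, hset⟩ := List.exists_flatMap_set_eq (expandSymbol r) c hp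
  have hk : k < n := by
    by_contra h
    simp [hn k (not_lt.mp h)] at hrk
  rw [hset]
  rcases s with j | a
  · have hj : j < k := hr k j (by simp [hrk])
    obtain ⟨d, hlen, hd, hexp⟩ := ih j hj q hq
    exact exists_copy_of_symbol hr hk hrk hlen hd (s' := .inl (n + j)) (by simpa using hj) hexp
  · have hq0 : q = 0 := by simpa [expandSymbol] using hq
    exact exists_copy_of_symbol hr hk hrk (d := fun _ => []) (by simp)
      (acyclic_shiftAppend_nil hr) (s' := .inr c) (by simp) (by simp [expandSymbol, hq0])

variable {T : List α}

def trunc (G : SLP α) : ℕ → List (ℕ ⊕ α) :=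
  fun x => if x < G.n then G.rhs x else []

theorem acyclic_trunc (G : SLP α) : Acyclic G.trunc := by
  intro x j hj
  unfold trunc at hj
  split at hj
  · next hx => exact G.wf x hx _ hj j rfl
  · simp at hj

theorem trunc_eq_nil (G : SLP α) {x : ℕ} (hx : G.n ≤ x) : G.trunc x = [] :=
  if_neg (not_lt.mpr hx)

theorem expand_trunc_eq (G : SLP α) {e : ℕ → List α}
    (he : ∀ i < G.n, e i = ((G.rhs i).map (Sum.elim e fun a => [a])).flatten) (x : ℕ)
    (hx : x < G.n) : expand G.trunc x = e x := by
  induction x using Nat.strong_induction_on with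
  | _ x ih =>
  rw [expand_eq G.acyclic_trunc, he x hx, trunc, if_pos hx, List.flatMap_def]
  congr 1
  refine List.map_congr_left fun s hs => ?_
  rcases s with j | a
  · have hj := G.wf x hx _ hs j rfl
    exact ih j hj (by omega)
  · rfl

theorem Generates.expand_trunc {G : SLP α} (hG : G.Generates T) :
    expand G.trunc (G.n - 1) = T := by
  obtain ⟨hn, e, he, rfl⟩ := hG
  exact G.expand_trunc_eq he _ (by omega)

def ofAcyclic (r : ℕ → List (ℕ ⊕ α)) (hr : Acyclic r) (N : ℕ) : SLP α :=
  ⟨N, r, fun i _ _ hs j hj => hr i j (hj ▸ hs)⟩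

theorem generates_ofAcyclic (hr : Acyclic r) {N : ℕ} (hN : 0 < N) :
    (ofAcyclic r hr N).Generates (expand r (N - 1)) :=
  ⟨hN, expand r, fun i _ => expand_eq hr i, rfl⟩

theorem size_ofAcyclic_shiftAppend (hr : Acyclic (shiftAppend r n d)) :
    (ofAcyclic (shiftAppend r n d) hr (n + n)).size =
      ∑ x ∈ Finset.range n, ((r x).length + (d x).length) := by
  rw [size, ofAcyclic, Finset.sum_range_add, ← Finset.sum_add_distrib]
  refine Finset.sum_congr rfl fun x hx => ?_
  simp [shiftAppend, Finset.mem_range.mp hx]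

theorem Generates.exists_generates_set_size_le {G : SLP α} (hG : G.Generates T) {i : ℕ}
    (hi : i < T.length) (c : α) :
    ∃ G' : SLP α, G'.Generates (T.set i c) ∧ G'.size ≤ 2 * G.size := by
  obtain ⟨d, hlen, hacyc, hexp⟩ := exists_copies_expand_set G.acyclic_trunc
    (fun _ => G.trunc_eq_nil) c (G.n - 1) i (by rwa [hG.expand_trunc])
  refine ⟨ofAcyclic _ hacyc (G.n + G.n), ?_, ?_⟩
  · have hn : 0 < G.n := hG.1
    have hroot : G.n + G.n - 1 = G.n + (G.n - 1) := by omega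
    simpa [hroot, hexp, hG.expand_trunc] using
      generates_ofAcyclic hacyc (N := G.n + G.n) (by omega)
  · rw [size_ofAcyclic_shiftAppend, size, two_mul, ← Finset.sum_add_distrib]
    refine Finset.sum_le_sum fun x hx => ?_
    simpa [trunc, Finset.mem_range.mp hx] using hlen x

end SLP

theorem gStar_le_size {α : Type*} {G : SLP α} {T : List α} (hG : G.Generates T) :
    gStar T ≤ G.size :=
  Nat.sInf_le ⟨G, hG, rfl⟩

theorem exists_generates_size_eq_gStar {α : Type*} (T : List α) :
    ∃ G : SLP α, G.Generates T ∧ G.size = gStar T := by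
  have hT : (⟨1, fun _ => T.map Sum.inr, by simp⟩ : SLP α).Generates T :=
    ⟨one_pos, fun _ => T, by simp [← List.flatMap_def], rfl⟩
  exact Nat.sInf_mem
    (⟨_, _, hT, rfl⟩ : {m | ∃ G : SLP α, G.Generates T ∧ G.size = m}.Nonempty)

theorem gStar_substitution_le_general {α : Type*} (T : List α) (i : ℕ) (c : α) :
    gStar (T.set i c) ≤ 2 * gStar T := by
  by_cases hi : i < T.length
  · obtain ⟨G, hG, hsize⟩ := exists_generates_size_eq_gStar T
    obtain ⟨G', hG', hsize'⟩ := hG.exists_generates_set_size_le hi c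
    calc gStar (T.set i c) ≤ G'.size := gStar_le_size hG'
      _ ≤ 2 * gStar T := hsize ▸ hsize'
  · rw [List.set_eq_of_length_le (not_lt.mp hi)]
    omega

/-- A single character substitution at most doubles the smallest grammar size:
if `T'` is obtained from `T` by substituting one character, then `g*(T') ≤ 2 · g*(T)`. -/
theorem gStar_substitution_le {α : Type*} (T : List α) (i : ℕ) (c : α)
    (hi : i < T.length) (hc : T[i]? ≠ some c) :
    gStar (T.set i c) ≤ 2 * gStar T :=
  gStar_substitution_le_general T i c
end
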